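/- Let F ∈ C⁰(ℝⁿ,ℝⁿ) with F(0) = 0. Consider the following three properties of solutions of ẋ = F(x): (A) for every ε > 0 there exists η > 0 such that every solution with |x(0)| < η satisfies x(ε) = 0; (B) for every ε > 0 there exists η > 0 such that every solution with |x(0)| < η satisfies |x(t)| < ε for all t ∈ [0,+∞); (C) every solution with x(0) = 0 satisfies x(t) = 0 for all t ∈ [0,+∞). Then the conjunction (A) and (B) is equivalent to the conjunction (A) and (C). -/

import Mathlib

open Set Filter

/-- Signed power: `⌊x⌉^a = sign(x) * |x|^a`. -/
noncomputable def spow (x a : ℝ) : ℝ := Real.sign x * |x| ^ a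

/-- Dilation `Λ_r(l, x) = (l^{r₁} x₁, …, l^{rₙ} xₙ)`. -/
noncomputable def dil {n : ℕ} (r : Fin n → ℝ) (l : ℝ) (x : Fin n → ℝ) : Fin n → ℝ :=
  fun i => l ^ r i * x i

/-- `x` is a solution of `ẋ = F(x)` on `[s, ∞)`. -/
def IsSolOn {E : Type*} [NormedAddCommGroup E] [NormedSpace ℝ E]
    (F : E → E) (x : ℝ → E) (s : ℝ) : Prop :=
  ∀ t ∈ Set.Ici s, HasDerivWithinAt x (F (x t)) (Set.Ici s) t

/-- The origin is (locally) asymptotically stable for `ẋ = F(x)`. -/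
def AsympStable {E : Type*} [NormedAddCommGroup E] [NormedSpace ℝ E] (F : E → E) : Prop :=
  (∀ ε > 0, ∃ η > 0, ∀ x : ℝ → E, IsSolOn F x 0 → ‖x 0‖ < η → ∀ t ≥ 0, ‖x t‖ < ε) ∧
  (∃ δ > 0, ∀ x : ℝ → E, IsSolOn F x 0 → ‖x 0‖ < δ →
    Filter.Tendsto x Filter.atTop (nhds 0))

/-- The origin is small-time stable for `ẋ = F(x)`. -/
def SmallTimeStable {E : Type*} [NormedAddCommGroup E] [NormedSpace ℝ E] (F : E → E) : Prop :=
  ∀ ε > 0, ∃ η > 0, ∀ x : ℝ → E, IsSolOn F x 0 → ‖x 0‖ < η →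
    x ε = 0 ∧ ∀ t ≥ 0, ‖x t‖ < ε

/-!
(C) follows from (A) since a solution starting at `0` satisfies `x(ε) = 0` for every `ε > 0`.
Conversely, let `‖F‖ < M` on the closed ball of radius `ε`. A solution with `‖x(0)‖ < ε / 2`
moves at speed less than `M` while it stays in that ball, so it cannot leave it before time
`T = ε / (2M)`. Choosing `η` from (A) for the time `T`, the solution is at `0` at time `T` and,
by (C) applied to the time-shifted solution, stays there afterwards.
-/

section Solutions

variable {E : Type*} [NormedAddCommGroup E] [NormedSpace ℝ E] {F : E → E} {x : ℝ → E}

theorem IsSolOn.continuousOn {s : ℝ} (hx : IsSolOn F x s) : ContinuousOn x (Ici s) :=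
  fun t ht => (hx t ht).continuousWithinAt

theorem IsSolOn.mono {s s' : ℝ} (hx : IsSolOn F x s) (hs : s ≤ s') : IsSolOn F x s' :=
  fun t ht => (hx t (le_trans hs ht)).mono (Ici_subset_Ici.mpr hs)

theorem IsSolOn.comp_add_const {s a : ℝ} (hx : IsSolOn F x (s + a)) :
    IsSolOn F (fun t => x (t + a)) s := by
  intro t ht
  have hshift : MapsTo (· + a) (Ici s) (Ici (s + a)) := fun u hu => by
    simpa using (mem_Ici.mp hu)
  simpa [Function.comp_def] using (hx (t + a) (hshift ht)).scomp t
    ((hasDerivAt_id t).add_const a).hasDerivWithinAt hshift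

theorem IsSolOn.norm_le_add_mul {s t M : ℝ} (hx : IsSolOn F x s) (hst : s ≤ t) (hM : 0 ≤ M)
    (hF : ∀ y, ‖y‖ ≤ ‖x s‖ + M * (t - s) → ‖F y‖ < M) :
    ‖x t‖ ≤ ‖x s‖ + M * (t - s) := by
  have hbarrier : ∀ u, HasDerivAt (fun u => ‖x s‖ + M * (u - s)) M u := fun u => by
    simpa using ((hasDerivAt_id u).sub_const s).const_mul M |>.const_add ‖x s‖
  refine image_norm_le_of_norm_deriv_right_lt_deriv_boundary
    (hx.continuousOn.mono Icc_subset_Ici_self)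
    (fun u hu => (hx u hu.1).mono (Ici_subset_Ici.mpr hu.1)) (by simp) hbarrier
    (fun u hu hxu => hF _ ?_) ⟨hst, le_rfl⟩
  rw [hxu]
  gcongr
  exact hu.2.le

end Solutions

theorem Continuous.exists_pos_norm_lt_of_norm_le {E G : Type*} [NormedAddCommGroup E]
    [ProperSpace E] [NormedAddCommGroup G] {f : E → G} (hf : Continuous f) (R : ℝ) :
    ∃ M > 0, ∀ y, ‖y‖ ≤ R → ‖f y‖ < M := by
  obtain ⟨C, hC⟩ := (isCompact_closedBall (0 : E) R).exists_bound_of_continuousOn hf.continuousOn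
  refine ⟨max C 0 + 1, by positivity, fun y hy => ?_⟩
  have := hC y (mem_closedBall_zero_iff.mpr hy)
  linarith [le_max_left C 0]

section Stability

variable {E : Type*} [NormedAddCommGroup E] [NormedSpace ℝ E] (F : E → E)

def ReachesZeroInSmallTime : Prop :=
  ∀ ε > (0:ℝ), ∃ η > (0:ℝ), ∀ x : ℝ → E, IsSolOn F x 0 → ‖x 0‖ < η → x ε = 0

def IsLyapunovStable : Prop :=
  ∀ ε > (0:ℝ), ∃ η > (0:ℝ), ∀ x : ℝ → E, IsSolOn F x 0 → ‖x 0‖ < η → ∀ t ≥ 0, ‖x t‖ < ε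

def StaysAtZero : Prop :=
  ∀ x : ℝ → E, IsSolOn F x 0 → x 0 = 0 → ∀ t ≥ 0, x t = 0

variable {F}

theorem ReachesZeroInSmallTime.staysAtZero (hA : ReachesZeroInSmallTime F) : StaysAtZero F := by
  intro x hx hx0 t ht
  rcases ht.eq_or_lt with rfl | ht
  · exact hx0
  · obtain ⟨η, hη, hreach⟩ := hA t ht
    exact hreach x hx (by simpa [hx0] using hη)

theorem StaysAtZero.eq_zero_of_le (hC : StaysAtZero F) {x : ℝ → E} (hx : IsSolOn F x 0)
    {a t : ℝ} (ha : 0 ≤ a) (hxa : x a = 0) (hat : a ≤ t) : x t = 0 := by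
  have hshift : IsSolOn F (fun u => x (u + a)) 0 := (hx.mono (by simpa using ha)).comp_add_const
  simpa using hC _ hshift (by simpa using hxa) (t - a) (sub_nonneg.mpr hat)

theorem isLyapunovStable_of_reachesZeroInSmallTime_of_staysAtZero [ProperSpace E]
    (hF : Continuous F) (hA : ReachesZeroInSmallTime F) (hC : StaysAtZero F) :
    IsLyapunovStable F := by
  intro ε hε
  obtain ⟨M, hM, hFM⟩ := hF.exists_pos_norm_lt_of_norm_le ε
  set T := ε / (2 * M)
  have hMT : M * T = ε / 2 := by simp only [T]; field_simp
  obtain ⟨η, hη, hreach⟩ := hA T (by positivity)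
  refine ⟨min η (ε / 2), by positivity, fun x hx hx0 t ht => ?_⟩
  have hx0ε : ‖x 0‖ < ε / 2 := hx0.trans_le (min_le_right _ _)
  rcases lt_or_ge t T with htT | hTt
  · have hspeed : ‖x 0‖ + M * (t - 0) < ε := by nlinarith
    exact (hx.norm_le_add_mul ht hM.le fun y hy => hFM y (by linarith)).trans_lt hspeed
  · have hxT : x T = 0 := hreach x hx (hx0.trans_le (min_le_left _ _))
    simpa [hC.eq_zero_of_le hx (by positivity) hxT hTt] using hε

end Stability

theorem stmt18 {n : ℕ} (F : (Fin n → ℝ) → (Fin n → ℝ)) (hF : Continuous F) :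
    ((∀ ε > (0:ℝ), ∃ η > (0:ℝ), ∀ x : ℝ → Fin n → ℝ,
        IsSolOn F x 0 → ‖x 0‖ < η → x ε = 0) ∧
     (∀ ε > (0:ℝ), ∃ η > (0:ℝ), ∀ x : ℝ → Fin n → ℝ,
        IsSolOn F x 0 → ‖x 0‖ < η → ∀ t ≥ 0, ‖x t‖ < ε)) ↔
    ((∀ ε > (0:ℝ), ∃ η > (0:ℝ), ∀ x : ℝ → Fin n → ℝ,
        IsSolOn F x 0 → ‖x 0‖ < η → x ε = 0) ∧
     (∀ x : ℝ → Fin n → ℝ, IsSolOn F x 0 → x 0 = 0 → ∀ t ≥ 0, x t = 0)) :=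
  show ReachesZeroInSmallTime F ∧ IsLyapunovStable F ↔ ReachesZeroInSmallTime F ∧ StaysAtZero F from
    ⟨fun ⟨hA, _⟩ => ⟨hA, hA.staysAtZero⟩,
      fun ⟨hA, hC⟩ => ⟨hA, isLyapunovStable_of_reachesZeroInSmallTime_of_staysAtZero hF hA hC⟩⟩
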